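/- arXiv:2209.12132 — 2 statements merged into one kernel-verified Lean document; each statement's English description precedes it below -/
import Mathlib

section
/- (Theorem 2.1, 'if' direction) Let G be a finite simple graph and k ≥ 1. If for every k-limited spanning subgraph M of G with σ(M) > 0 there exists an M-augmenting trail in G, then G has a k-factor. -/
open SimpleGraph

variable {V : Type*}

/-- The degree of a vertex `v` in a (sub)graph `M`. -/
noncomputable def mdeg (M : SimpleGraph V) (v : V) : ℕ := (M.neighborSet v).ncard

/-- `M` is a `k`-limited spanning subgraph of `G`: a subgraph on all the vertices of `G`
with all degrees at most `k`. -/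
def IsKLimitedSpanning (G M : SimpleGraph V) (k : ℕ) : Prop :=
  M ≤ G ∧ ∀ v : V, mdeg M v ≤ k

/-- `F` is a `k`-factor of `G`: a spanning subgraph all of whose degrees equal `k`. -/
def IsKFactor (G F : SimpleGraph V) (k : ℕ) : Prop :=
  F ≤ G ∧ ∀ v : V, mdeg F v = k

/-- The deficiency `σ(M) = ∑_{v} (k - deg_M v)`. -/
noncomputable def sigmaDef [Fintype V] (M : SimpleGraph V) (k : ℕ) : ℕ :=
  ∑ v : V, (k - mdeg M v)

/-- An `M`-alternating trail: a trail whose consecutive edges alternate between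
membership and non-membership in `E(M)`. -/
def IsAltTrail {G : SimpleGraph V} (M : SimpleGraph V) {u v : V} (p : G.Walk u v) : Prop :=
  p.IsTrail ∧ ∀ (i : ℕ) (h : i + 1 < p.edges.length),
    ((p.edges[i]'(Nat.lt_of_succ_lt h)) ∈ M.edgeSet ↔ (p.edges[i+1]'h) ∉ M.edgeSet)

/-- An `M`-augmenting trail (with respect to the bound `k`): an `M`-alternating trail whose
first and last edges are not in `E(M)`, whose endpoints are unfilled in `M`, all of whose
inner vertex visits are filled in `M`, and which, if closed at `v₀ = u = v`, additionally
satisfies `deg_M v₀ < k - 1`. -/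
def IsAugTrail (G M : SimpleGraph V) (k : ℕ) {u v : V} (p : G.Walk u v) : Prop :=
  IsAltTrail M p ∧
  p.edges ≠ [] ∧
  (∀ e, p.edges.head? = some e → e ∉ M.edgeSet) ∧
  (∀ e, p.edges.getLast? = some e → e ∉ M.edgeSet) ∧
  mdeg M u < k ∧ mdeg M v < k ∧
  (∀ w ∈ p.support.tail.dropLast, mdeg M w = k) ∧
  (u = v → mdeg M u < k - 1)

/-!
Take a `k`-limited spanning subgraph `M` of least deficiency; the empty graph is one. Switching
`M` along a trail `P`, i.e. passing to `M ∆ E(P)`, changes `deg_M v` by the number of non-`M`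
edges of `P` at `v` minus the number of `M`-edges of `P` at `v`. If `P` alternates, the two edges
of `P` through an inner visit of `v` cancel, so only the ends gain: an end of an augmenting trail
gains one, and the base of a closed one gains two. The conditions on the ends of an augmenting
trail keep `M ∆ E(P)` `k`-limited while its deficiency drops, so by minimality `σ(M) = 0`.
-/

open scoped symmDiff

theorem SimpleGraph.edgeSet_symmDiff (G₁ G₂ : SimpleGraph V) :
    (G₁ ∆ G₂).edgeSet = G₁.edgeSet ∆ G₂.edgeSet := by
  simp only [symmDiff_def, edgeSet_sup, edgeSet_sdiff]
  rfl

section Switching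

open Classical

theorem mdeg_eq_sum [Fintype V] (M : SimpleGraph V) (v : V) :
    (mdeg M v : ℤ) = ∑ e : Sym2 V, if e ∈ M.edgeSet ∧ v ∈ e then 1 else 0 := by
  rw [Finset.sum_boole, mdeg, ← Nat.card_coe_set_eq,
    ← Nat.card_congr (M.incidenceSetEquivNeighborSet v), Nat.card_coe_set_eq,
    ← Set.ncard_coe_finset, Finset.coe_filter]
  simp [incidenceSet]

/-- The change of `deg_M` at an end of `e` when `e` is switched into or out of `M`. -/
noncomputable def edgeSign (M : SimpleGraph V) (e : Sym2 V) : ℤ :=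
  if e ∈ M.edgeSet then -1 else 1

noncomputable def incidenceSign (M : SimpleGraph V) (v : V) (e : Sym2 V) : ℤ :=
  if v ∈ e then edgeSign M e else 0

theorem edgeSign_eq_neg_of_iff {M : SimpleGraph V} {e f : Sym2 V}
    (h : e ∈ M.edgeSet ↔ f ∉ M.edgeSet) : edgeSign M f = -edgeSign M e := by
  by_cases hf : f ∈ M.edgeSet <;> simp [edgeSign, hf, h]

theorem incidenceSign_mk {a c : V} (h : a ≠ c) (M : SimpleGraph V) (v : V) :
    incidenceSign M v s(a, c) =
      (if v = a then edgeSign M s(a, c) else 0) + (if v = c then edgeSign M s(a, c) else 0) := by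
  by_cases hva : v = a
  · subst hva
    simp [incidenceSign, h]
  · by_cases hvc : v = c
    · subst hvc
      simp [incidenceSign, hva]
    · simp [incidenceSign, hva, hvc]

theorem mdeg_symmDiff_walk [Fintype V] {G : SimpleGraph V} (M : SimpleGraph V) {a b : V}
    {p : G.Walk a b} (hp : p.IsTrail) (v : V) :
    (mdeg (M ∆ p.toSubgraph.spanningCoe) v : ℤ) =
      mdeg M v + (p.edges.map (incidenceSign M v)).sum := by
  rw [← List.sum_toFinset _ hp.edges_nodup, ← Finset.univ_inter p.edges.toFinset,
    ← Finset.sum_ite_mem, mdeg_eq_sum, mdeg_eq_sum, ← Finset.sum_add_distrib]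
  refine Finset.sum_congr rfl fun e _ => ?_
  simp only [edgeSet_symmDiff, Subgraph.edgeSet_spanningCoe, Walk.edgeSet_toSubgraph,
    Set.mem_symmDiff, Walk.mem_edgeSet, List.mem_toFinset, incidenceSign, edgeSign]
  by_cases hM : e ∈ M.edgeSet <;> by_cases hp : e ∈ p.edges <;> by_cases hv : v ∈ e <;>
    simp [hM, hp, hv]

theorem SimpleGraph.Walk.sum_incidenceSign_of_isChain {G : SimpleGraph V} (M : SimpleGraph V)
    {a b : V} (p : G.Walk a b)
    (halt : p.edges.IsChain fun e f => e ∈ M.edgeSet ↔ f ∉ M.edgeSet) {e₁ e₂ : Sym2 V}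
    (h₁ : p.edges.head? = some e₁) (h₂ : p.edges.getLast? = some e₂) (v : V) :
    (p.edges.map (incidenceSign M v)).sum =
      (if v = a then edgeSign M e₁ else 0) + (if v = b then edgeSign M e₂ else 0) := by
  induction p generalizing e₁ with
  | nil => simp at h₁
  | @cons a c b hac q ih =>
    simp only [Walk.edges_cons, List.head?_cons, Option.some.injEq] at h₁ halt h₂
    subst h₁
    cases q with
    | nil =>
      simp only [Walk.edges_nil, List.getLast?_singleton, Option.some.injEq] at h₂
      subst h₂
      simp [incidenceSign_mk hac.ne]
    | @cons _ d _ hcd r =>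
      simp only [Walk.edges_cons, List.isChain_cons_cons] at halt h₂
      rw [List.getLast?_cons_cons] at h₂
      rw [Walk.edges_cons, List.map_cons, List.sum_cons, ih halt.2 (e₁ := s(c, d)) rfl h₂,
        incidenceSign_mk hac.ne, edgeSign_eq_neg_of_iff halt.1]
      split_ifs <;> ring

end Switching

namespace IsAugTrail

variable [Fintype V] {G M : SimpleGraph V} {k : ℕ} {a b : V} {p : G.Walk a b}

open Classical in
theorem mdeg_symmDiff (hp : IsAugTrail G M k p) (v : V) :
    (mdeg (M ∆ p.toSubgraph.spanningCoe) v : ℤ) =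
      mdeg M v + (if v = a then 1 else 0) + (if v = b then 1 else 0) := by
  obtain ⟨⟨htrail, halt⟩, hne, hhead, hlast, -⟩ := hp
  have h₁ := List.head?_eq_some_head hne
  have h₂ := List.getLast?_eq_some_getLast hne
  have hsign : ∀ e ∉ M.edgeSet, edgeSign M e = 1 := fun e he => if_neg he
  rw [mdeg_symmDiff_walk M htrail,
    p.sum_incidenceSign_of_isChain M (List.isChain_iff_getElem.mpr halt) h₁ h₂,
    hsign _ (hhead _ h₁), hsign _ (hlast _ h₂), add_assoc]

theorem isKLimitedSpanning_symmDiff (hp : IsAugTrail G M k p) (hM : IsKLimitedSpanning G M k) :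
    IsKLimitedSpanning G (M ∆ p.toSubgraph.spanningCoe) k := by
  refine ⟨symmDiff_le_sup.trans (sup_le hM.1 p.toSubgraph.spanningCoe_le), fun v => ?_⟩
  have hdeg := hp.mdeg_symmDiff v
  obtain ⟨-, -, -, -, ha, hb, -, hclosed⟩ := hp
  have hv := hM.2 v
  rcases eq_or_ne v a with rfl | hva <;> rcases eq_or_ne v b with rfl | hvb
  · have := hclosed rfl
    simp only [↓reduceIte] at hdeg
    omega
  · simp only [if_neg hvb] at hdeg
    omega
  · simp only [if_neg hva] at hdeg
    omega
  · simp only [if_neg hva, if_neg hvb] at hdeg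
    omega

theorem sigmaDef_symmDiff_lt (hp : IsAugTrail G M k p) :
    sigmaDef (M ∆ p.toSubgraph.spanningCoe) k < sigmaDef M k := by
  refine Finset.sum_lt_sum (fun v _ => ?_) ⟨a, Finset.mem_univ a, ?_⟩
  · have hdeg := hp.mdeg_symmDiff v
    split_ifs at hdeg <;> omega
  · have hdeg := hp.mdeg_symmDiff a
    obtain ⟨-, -, -, -, ha, -⟩ := hp
    rw [if_pos rfl] at hdeg
    split_ifs at hdeg <;> omega

end IsAugTrail

theorem isKLimitedSpanning_bot (G : SimpleGraph V) (k : ℕ) : IsKLimitedSpanning G ⊥ k :=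
  ⟨bot_le, fun v => by simp [mdeg]⟩

theorem IsKLimitedSpanning.isKFactor_of_sigmaDef_eq_zero [Fintype V] {G M : SimpleGraph V}
    {k : ℕ} (hM : IsKLimitedSpanning G M k) (h0 : sigmaDef M k = 0) : IsKFactor G M k :=
  ⟨hM.1, fun v => by
    have := Finset.sum_eq_zero_iff.mp h0 v (Finset.mem_univ v)
    have := hM.2 v
    omega⟩

theorem kFactor_of_augTrails_general [Fintype V] (G : SimpleGraph V) (k : ℕ)
    (h : ∀ M : SimpleGraph V, IsKLimitedSpanning G M k → 0 < sigmaDef M k →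
      ∃ (a b : V) (p : G.Walk a b), IsAugTrail G M k p) :
    ∃ F : SimpleGraph V, IsKFactor G F k := by
  obtain ⟨M, hM, hmin⟩ := (measure fun M : SimpleGraph V => sigmaDef M k).wf.has_min
    {M | IsKLimitedSpanning G M k} ⟨⊥, isKLimitedSpanning_bot G k⟩
  refine ⟨M, hM.isKFactor_of_sigmaDef_eq_zero (Nat.eq_zero_of_not_pos fun hpos => ?_)⟩
  obtain ⟨a, b, p, hp⟩ := h M hM hpos
  exact hmin _ (hp.isKLimitedSpanning_symmDiff hM) hp.sigmaDef_symmDiff_lt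

/-- Theorem 2.1, 'if' direction: If every `k`-limited spanning subgraph `M`
of `G` with `σ(M) > 0` admits an `M`-augmenting trail, then `G` has a `k`-factor. -/
theorem kFactor_of_augTrails [Fintype V] (G : SimpleGraph V) (k : ℕ) (hk : 1 ≤ k)
    (h : ∀ M : SimpleGraph V, IsKLimitedSpanning G M k → 0 < sigmaDef M k →
      ∃ (a b : V) (p : G.Walk a b), IsAugTrail G M k p) :
    ∃ F : SimpleGraph V, IsKFactor G F k :=
  kFactor_of_augTrails_general G k h
end

section
/- Let G be a finite simple graph, k ≥ 1, and M a k-limited spanning subgraph of G. Every M-augmenting trail of minimum length among all M-augmenting trails in G has no repeated vertex visits v_i = v_j with i < j and j − i even. -/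
open SimpleGraph

variable {V : Type*}

/-!
Cutting the closed subtrail between two visits `v_i = v_j` out of an augmenting trail keeps
its endpoints and removes only inner visits. The `M`-edges of an augmenting trail are exactly
those in odd position, and when `j - i` is even this pattern survives the cut, so the result
is a strictly shorter augmenting trail.
-/

namespace List

variable {α : Type*} {S : Set α} {l : List α}

theorem alternating_and_head_not_mem_iff :
    ((∀ i (h : i + 1 < l.length), l[i] ∈ S ↔ l[i + 1] ∉ S) ∧ ∀ a, l.head? = some a → a ∉ S) ↔
      ∀ i (h : i < l.length), l[i] ∈ S ↔ Odd i := by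
  constructor
  · rintro ⟨halt, hhead⟩ i
    induction i with
    | zero => exact fun h ↦ iff_of_false (hhead _ (by simp [head?_eq_getElem?, h])) (by simp)
    | succ i ih =>
      intro h
      rw [Nat.odd_add_one, ← ih (by omega), halt i h, not_not]
  · intro hpar
    refine ⟨fun i h ↦ ?_, fun a ha ↦ ?_⟩
    · rw [hpar, hpar, Nat.odd_add_one, not_not]
    · cases l with
      | nil => simp at ha
      | cons b l =>
        rw [head?_cons, Option.some_inj] at ha
        simpa [ha] using hpar 0 (by simp)

theorem ne_nil_and_getLast_not_mem_iff (hpar : ∀ i (h : i < l.length), l[i] ∈ S ↔ Odd i) :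
    (l ≠ [] ∧ ∀ a, l.getLast? = some a → a ∉ S) ↔ Odd l.length := by
  rw [← length_pos_iff]
  constructor
  · rintro ⟨hpos, hlast⟩
    have := hlast _ (by rw [getLast?_eq_getElem?, getElem?_eq_getElem (by omega)])
    rw [hpar, Nat.odd_iff] at this
    rw [Nat.odd_iff]
    omega
  · intro hodd
    have hpos := hodd.pos
    refine ⟨hpos, fun a ha ↦ ?_⟩
    rw [getLast?_eq_getElem?, getElem?_eq_getElem (by omega), Option.some_inj] at ha
    rw [← ha, hpar, Nat.odd_iff]
    rw [Nat.odd_iff] at hodd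
    omega

theorem getElem_take_append_drop_mem_iff_odd (hpar : ∀ i (h : i < l.length), l[i] ∈ S ↔ Odd i)
    {i j : ℕ} (hij : i ≤ j) (heven : Even (j - i)) (m : ℕ)
    (hm : m < (l.take i ++ l.drop j).length) :
    (l.take i ++ l.drop j)[m] ∈ S ↔ Odd m := by
  rw [getElem_append]
  split_ifs with h
  · simpa using hpar m (by simp at h; omega)
  · have hi : i ≤ l.length := by simp at h hm; omega
    simp only [getElem_drop, length_take, Nat.min_eq_left hi] at h ⊢
    rw [hpar, Nat.odd_iff, Nat.odd_iff]
    rw [Nat.even_iff] at heven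
    omega

theorem Nodup.take_append_drop (hl : l.Nodup) {i j : ℕ} (hij : i ≤ j) :
    (l.take i ++ l.drop j).Nodup := by
  refine (Sublist.append_left (drop_sublist_drop_left l hij) _).nodup ?_
  rwa [List.take_append_drop]

end List

namespace SimpleGraph.Walk

variable {G : SimpleGraph V} {u v : V}

theorem mem_support_tail_dropLast_iff (p : G.Walk u v) {w : V} :
    w ∈ p.support.tail.dropLast ↔ ∃ m, 0 < m ∧ m < p.length ∧ p.getVert m = w := by
  simp only [List.mem_iff_getElem, List.getElem_dropLast, List.getElem_tail, List.length_dropLast,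
    List.length_tail, length_support]
  constructor
  · rintro ⟨n, hn, rfl⟩
    exact ⟨n + 1, by omega, by omega, getVert_eq_support_getElem _ (by omega)⟩
  · rintro ⟨m, hm0, hm, rfl⟩
    refine ⟨m - 1, by omega, ?_⟩
    simp only [Nat.sub_add_cancel hm0, getVert_eq_support_getElem _ hm.le]

def shortcut (p : G.Walk u v) {i j : ℕ} (h : p.getVert i = p.getVert j) : G.Walk u v :=
  (p.take i).append ((p.drop j).copy h.symm rfl)

variable (p : G.Walk u v) {i j : ℕ} (h : p.getVert i = p.getVert j)

theorem edges_shortcut : (p.shortcut h).edges = p.edges.take i ++ p.edges.drop j := by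
  simp [shortcut, edges_take, edges_drop]

theorem length_shortcut (hi : i ≤ p.length) : (p.shortcut h).length = i + (p.length - j) := by
  simp [shortcut, hi]

theorem getVert_shortcut (hi : i ≤ p.length) (m : ℕ) :
    (p.shortcut h).getVert m = if m < i then p.getVert m else p.getVert (j + (m - i)) := by
  simp only [shortcut, getVert_append, take_length, Nat.min_eq_left hi, take_getVert,
    getVert_copy, drop_getVert]
  split_ifs with hm
  · rw [Nat.min_eq_right hm.le]
  · rfl

end SimpleGraph.Walk

open SimpleGraph.Walk

section AugmentingTrail

variable {G M : SimpleGraph V} {k : ℕ} {u v : V}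

theorem isAugTrail_iff (p : G.Walk u v) :
    IsAugTrail G M k p ↔
      p.edges.Nodup ∧ (∀ i (h : i < p.edges.length), p.edges[i] ∈ M.edgeSet ↔ Odd i) ∧
        Odd p.length ∧ mdeg M u < k ∧ mdeg M v < k ∧
        (∀ m, 0 < m → m < p.length → mdeg M (p.getVert m) = k) ∧ (u = v → mdeg M u < k - 1) := by
  have hinner : (∀ w ∈ p.support.tail.dropLast, mdeg M w = k) ↔
      ∀ m, 0 < m → m < p.length → mdeg M (p.getVert m) = k := by
    simp only [mem_support_tail_dropLast_iff, forall_exists_index, and_imp]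
    exact ⟨fun H m hm0 hm ↦ H _ m hm0 hm rfl, fun H _ m hm0 hm hw ↦ hw ▸ H m hm0 hm⟩
  rw [IsAugTrail, IsAltTrail, isTrail_def, hinner, ← length_edges]
  constructor
  · rintro ⟨⟨hnodup, halt⟩, hne, hhead, hlast, hrest⟩
    have hpar := List.alternating_and_head_not_mem_iff.mp ⟨halt, hhead⟩
    exact ⟨hnodup, hpar, (List.ne_nil_and_getLast_not_mem_iff hpar).mp ⟨hne, hlast⟩, hrest⟩
  · rintro ⟨hnodup, hpar, hodd, hrest⟩
    obtain ⟨halt, hhead⟩ := List.alternating_and_head_not_mem_iff.mpr hpar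
    obtain ⟨hne, hlast⟩ := (List.ne_nil_and_getLast_not_mem_iff hpar).mpr hodd
    exact ⟨⟨hnodup, halt⟩, hne, hhead, hlast, hrest⟩

theorem IsAugTrail.shortcut {p : G.Walk u v} (hp : IsAugTrail G M k p) {i j : ℕ} (hij : i ≤ j)
    (hj : j ≤ p.length) (heven : Even (j - i)) (h : p.getVert i = p.getVert j) :
    IsAugTrail G M k (p.shortcut h) := by
  obtain ⟨hnodup, hpar, hodd, hu, hv, hinner, hclosed⟩ := (isAugTrail_iff p).mp hp
  have hi : i ≤ p.length := hij.trans hj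
  refine (isAugTrail_iff _).mpr ⟨?_, ?_, ?_, hu, hv, fun m hm0 hm ↦ ?_, hclosed⟩
  · rw [edges_shortcut]
    exact hnodup.take_append_drop hij
  · simp only [edges_shortcut]
    exact List.getElem_take_append_drop_mem_iff_odd hpar hij heven
  · rw [length_shortcut p h hi]
    rw [Nat.odd_iff] at hodd ⊢
    rw [Nat.even_iff] at heven
    omega
  · rw [length_shortcut p h hi] at hm
    rw [getVert_shortcut p h hi]
    split_ifs with hmi
    · exact hinner m hm0 (by omega)
    · exact hinner _ (by omega) (by omega)

end AugmentingTrail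

theorem min_augTrail_no_even_repeat_general (G M : SimpleGraph V) (k : ℕ) {u w : V} (p : G.Walk u w)
    (hP : IsAugTrail G M k p)
    (hmin : ∀ (a b : V) (q : G.Walk a b), IsAugTrail G M k q → p.length ≤ q.length) :
    ∀ i j : ℕ, i < j → j ≤ p.length → Even (j - i) → p.getVert i ≠ p.getVert j := by
  intro i j hij hj heven h
  have hshort := hmin u w _ (hP.shortcut hij.le hj heven h)
  rw [length_shortcut p h (hij.le.trans hj)] at hshort
  omega

/-- An `M`-augmenting trail of minimum length among all `M`-augmenting
trails has no repeated vertex visits `v_i = v_j` with `i < j` and `j − i` even. -/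
theorem min_augTrail_no_even_repeat [Fintype V] (G M : SimpleGraph V) (k : ℕ) (hk : 1 ≤ k)
    (hM : IsKLimitedSpanning G M k) {u w : V} (p : G.Walk u w)
    (hP : IsAugTrail G M k p)
    (hmin : ∀ (a b : V) (q : G.Walk a b), IsAugTrail G M k q → p.length ≤ q.length) :
    ∀ i j : ℕ, i < j → j ≤ p.length → Even (j - i) → p.getVert i ≠ p.getVert j :=
  min_augTrail_no_even_repeat_general G M k p hP hmin
end
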